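/- arXiv:1612.04638 — 2 statements merged into one kernel-verified Lean document; each statement's English description precedes it below -/
import Mathlib

section
/- Let g be a constant real symmetric 3×3 matrix and Z0 a smooth vector field on an open set U ⊆ ℝ³ such that G := g(Z0,Z0) is nowhere zero on U. Let a := g·Z0 and let b be the vector field with k-th component (2/G)·Σ_{j,l} g_{kl} Z0^j ∂Z0^l/∂x^j. If ⟨curl a, a⟩ = 0 identically on U, then ⟨curl b, a⟩ = 0 identically on U. -/
noncomputable section

/-- Partial derivative `∂f/∂xⁱ` at `p`. -/
def pd (i : Fin 3) (f : (Fin 3 → ℝ) → ℝ) (p : Fin 3 → ℝ) : ℝ :=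
  fderiv ℝ f p (Pi.single i 1)

/-- Gradient of a scalar function. -/
def grad (f : (Fin 3 → ℝ) → ℝ) (p : Fin 3 → ℝ) : Fin 3 → ℝ :=
  fun i => pd i f p

/-- Directional derivative `Σᵢ vⁱ ∂f/∂xⁱ` of `f` along the vector `v` at `p`. -/
def dd (v : Fin 3 → ℝ) (f : (Fin 3 → ℝ) → ℝ) (p : Fin 3 → ℝ) : ℝ :=
  ∑ i, v i * pd i f p

/-- `(∇_W W)ⁱ = Σⱼ Wʲ ∂Wⁱ/∂xʲ`. -/
def nab (W : (Fin 3 → ℝ) → (Fin 3 → ℝ)) (p : Fin 3 → ℝ) : Fin 3 → ℝ :=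
  fun i => ∑ j, W p j * pd j (fun q => W q i) p

/-- Euclidean cross product on `ℝ³`. -/
def cross (a b : Fin 3 → ℝ) : Fin 3 → ℝ :=
  ![a 1 * b 2 - a 2 * b 1, a 2 * b 0 - a 0 * b 2, a 0 * b 1 - a 1 * b 0]

/-- `g(v,w) = Σᵢⱼ gᵢⱼ vⁱ wʲ`. -/
def gB (g : Matrix (Fin 3) (Fin 3) ℝ) (v w : Fin 3 → ℝ) : ℝ :=
  ∑ i, ∑ j, g i j * v i * w j

/-- Lie bracket of vector fields: `[V,W]ⁱ = Σⱼ (Vʲ ∂Wⁱ/∂xʲ − Wʲ ∂Vⁱ/∂xʲ)`. -/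
def lieB (V W : (Fin 3 → ℝ) → (Fin 3 → ℝ)) (p : Fin 3 → ℝ) : Fin 3 → ℝ :=
  fun i => ∑ j, (V p j * pd j (fun q => W q i) p - W p j * pd j (fun q => V q i) p)

/-- curl of a vector field on `ℝ³`. -/
def curl (a : (Fin 3 → ℝ) → (Fin 3 → ℝ)) (p : Fin 3 → ℝ) : Fin 3 → ℝ :=
  ![pd 1 (fun q => a q 2) p - pd 2 (fun q => a q 1) p,
    pd 2 (fun q => a q 0) p - pd 0 (fun q => a q 2) p,
    pd 0 (fun q => a q 1) p - pd 1 (fun q => a q 0) p]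

/-- divergence of a vector field. -/
def divg (W : (Fin 3 → ℝ) → (Fin 3 → ℝ)) (p : Fin 3 → ℝ) : ℝ :=
  ∑ i, pd i (fun q => W q i) p

/-- Euclidean inner product on `ℝ³`. -/
def ip (a b : Fin 3 → ℝ) : ℝ := ∑ i, a i * b i

set_option linter.unusedVariables false

/-! Write `c = curl a`. Because `g` is constant and symmetric, `(Z·∇)a = c × Z + ½ ∇G`, so
`b = (2/G) (c × Z + ½ ∇G)`; as gradients are curl-free and `∇(2/G) ∥ ∇G`,
`curl b = ∇(2/G) × (c × Z) + (2/G) curl (c × Z)`. Pair with `a`, using `⟨c, a⟩ = 0` and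
`⟨Z, a⟩ = G`: the first term contributes `(2/G) ⟨c, ∇G⟩`. Expanding `curl (c × Z)`, with
`div c = 0` and `Z·∇⟨c, a⟩ = 0`, gives `⟨curl (c × Z), a⟩ = -⟨c, (Z·∇)a⟩ - ⟨(c·∇)Z, a⟩
= -⟨c, ∇G⟩`, which cancels it. -/

open Filter Topology
open scoped Matrix

local notation "ℝ³" => Fin 3 → ℝ

section PartialDerivative

variable {f h : ℝ³ → ℝ} {p : ℝ³} {i j : Fin 3}

theorem pd_congr (hfh : f =ᶠ[𝓝 p] h) : pd i f p = pd i h p := by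
  rw [pd, pd, hfh.fderiv_eq]

theorem pd_eq_zero_of_eventuallyEq_zero (hf : f =ᶠ[𝓝 p] 0) : pd i f p = 0 := by
  rw [pd_congr hf]
  simp [pd, show (0 : ℝ³ → ℝ) = fun _ => 0 from rfl]

theorem pd_add (hf : DifferentiableAt ℝ f p) (hh : DifferentiableAt ℝ h p) :
    pd i (fun q => f q + h q) p = pd i f p + pd i h p := by
  simp [pd, fderiv_fun_add hf hh]

theorem pd_sub (hf : DifferentiableAt ℝ f p) (hh : DifferentiableAt ℝ h p) :
    pd i (fun q => f q - h q) p = pd i f p - pd i h p := by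
  simp [pd, fderiv_fun_sub hf hh]

theorem pd_mul (hf : DifferentiableAt ℝ f p) (hh : DifferentiableAt ℝ h p) :
    pd i (fun q => f q * h q) p = pd i f p * h p + f p * pd i h p := by
  simp [pd, fderiv_fun_mul hf hh]; ring

theorem pd_const_mul (c : ℝ) : pd i (fun q => c * f q) p = c * pd i f p := by
  simpa [pd, Pi.smul_def] using
    congr($(fderiv_const_smul_field (f := f) c) p (Pi.single i 1))

theorem pd_sum {ι : Type*} (s : Finset ι) {F : ι → ℝ³ → ℝ}
    (hF : ∀ k ∈ s, DifferentiableAt ℝ (F k) p) :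
    pd i (fun q => ∑ k ∈ s, F k q) p = ∑ k ∈ s, pd i (F k) p := by
  simp [pd, fderiv_fun_sum hF]

theorem pd_const_div (c : ℝ) (hf : DifferentiableAt ℝ f p) (hf0 : f p ≠ 0) :
    pd i (fun q => c / f q) p = -(c * pd i f p) / f p ^ 2 := by
  have hderiv : HasFDerivAt (fun q => c / f q) (-((c * (f p ^ 2)⁻¹) • fderiv ℝ f p)) p := by
    simpa [div_eq_mul_inv, Function.comp_def] using
      ((hasDerivAt_inv hf0).const_mul c).comp_hasFDerivAt p hf.hasFDerivAt
  simp [pd, hderiv.fderiv]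
  ring

theorem ContDiffAt.differentiableAt_pd (hf : ContDiffAt ℝ 2 f p) :
    DifferentiableAt ℝ (pd i f) p :=
  ((hf.fderiv_right (m := 1) (by norm_num)).differentiableAt (by norm_num)).clm_apply
    (differentiableAt_const _)

theorem pd_comm (hf : ContDiffAt ℝ 2 f p) : pd i (pd j f) p = pd j (pd i f) p := by
  have hf' : DifferentiableAt ℝ (fderiv ℝ f) p :=
    (hf.fderiv_right (m := 1) (by norm_num)).differentiableAt (by norm_num)
  have hsymm := hf.isSymmSndFDerivAt (by simp)
  unfold pd
  simp only [fderiv_clm_apply hf' (differentiableAt_const _)]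
  simpa using hsymm (Pi.single i 1) (Pi.single j 1)

end PartialDerivative

theorem cross_eq_crossProduct (u v : ℝ³) : cross u v = u ⨯₃ v := (cross_apply u v).symm

theorem ip_eq_dotProduct (u v : ℝ³) : ip u v = u ⬝ᵥ v := rfl

section VectorCalculus

variable {V W : ℝ³ → ℝ³} {f : ℝ³ → ℝ} {p : ℝ³}

/-- `(v·∇)W` at `p`. -/
def dirDeriv (v : ℝ³) (W : ℝ³ → ℝ³) (p : ℝ³) : ℝ³ := fun i => dd v (fun q => W q i) p

theorem dd_single (i : Fin 3) : dd (Pi.single i 1) f p = pd i f p := by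
  simp [dd, Pi.single_apply]

theorem dirDeriv_single (i : Fin 3) :
    dirDeriv (Pi.single i 1) V p = fun l => pd i (fun q => V q l) p := by
  funext l
  exact dd_single i

theorem differentiableAt_cross (hV : DifferentiableAt ℝ V p) (hW : DifferentiableAt ℝ W p) :
    DifferentiableAt ℝ (fun q => cross (V q) (W q)) p := by
  have hVi := differentiableAt_pi.1 hV
  have hWi := differentiableAt_pi.1 hW
  refine differentiableAt_pi.2 fun i => ?_
  fin_cases i <;> simp only [cross] <;> simp <;> fun_prop

theorem ContDiffAt.differentiableAt_grad (hf : ContDiffAt ℝ 2 f p) :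
    DifferentiableAt ℝ (grad f) p :=
  differentiableAt_pi.2 fun _ => hf.differentiableAt_pd

theorem ContDiffAt.differentiableAt_curl (hV : ContDiffAt ℝ 2 V p) :
    DifferentiableAt ℝ (curl V) p := by
  have hd := fun i j => (contDiffAt_pi.1 hV i).differentiableAt_pd (i := j)
  refine differentiableAt_pi.2 fun i => ?_
  fin_cases i <;> simp only [curl] <;> simp <;> exact (hd _ _).sub (hd _ _)

theorem curl_congr (h : V =ᶠ[𝓝 p] W) : curl V p = curl W p := by
  have hi : ∀ i, (fun q => V q i) =ᶠ[𝓝 p] fun q => W q i :=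
    fun i => h.mono fun q hq => congrFun hq i
  simp only [curl, pd_congr (hi _)]

theorem curl_add (hV : DifferentiableAt ℝ V p) (hW : DifferentiableAt ℝ W p) :
    curl (fun q => V q + W q) p = curl V p + curl W p := by
  have hVi := differentiableAt_pi.1 hV
  have hWi := differentiableAt_pi.1 hW
  ext i; fin_cases i <;> simp [curl, pd_add (hVi _) (hWi _)] <;> ring

theorem curl_smul (hf : DifferentiableAt ℝ f p) (hV : DifferentiableAt ℝ V p) :
    curl (fun q => f q • V q) p = cross (grad f p) (V p) + f p • curl V p := by
  have hVi := differentiableAt_pi.1 hV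
  ext i; fin_cases i <;> simp [curl, cross, grad, pd_mul hf (hVi _)] <;> ring

theorem curl_const_smul (c : ℝ) : curl (fun q => c • V q) p = c • curl V p := by
  ext i; fin_cases i <;> simp [curl, pd_const_mul] <;> ring

theorem curl_grad (hf : ContDiffAt ℝ 2 f p) : curl (grad f) p = 0 := by
  ext i; fin_cases i <;>
    simp [curl, grad, pd_comm hf (i := 0) (j := 1), pd_comm hf (i := 0) (j := 2),
      pd_comm hf (i := 1) (j := 2)]

theorem divg_curl (hV : ContDiffAt ℝ 2 V p) : divg (curl V) p = 0 := by
  have hVi := fun i => contDiffAt_pi.1 hV i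
  have hd := fun i j => (hVi i).differentiableAt_pd (i := j)
  simp [divg, curl, Fin.sum_univ_three, pd_sub (hd _ _) (hd _ _),
    pd_comm (hVi 0) (i := 1) (j := 2), pd_comm (hVi 1) (i := 0) (j := 2),
    pd_comm (hVi 2) (i := 0) (j := 1)]

theorem curl_cross (hV : DifferentiableAt ℝ V p) (hW : DifferentiableAt ℝ W p) :
    curl (fun q => cross (V q) (W q)) p
      = divg W p • V p - divg V p • W p + dirDeriv (W p) V p - dirDeriv (V p) W p := by
  have hVi := differentiableAt_pi.1 hV
  have hWi := differentiableAt_pi.1 hW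
  ext i; fin_cases i <;>
    simp [curl, cross, divg, dirDeriv, dd, Fin.sum_univ_three, pd_sub, pd_mul, *] <;> ring

theorem dd_ip (hV : DifferentiableAt ℝ V p) (hW : DifferentiableAt ℝ W p) (v : ℝ³) :
    dd v (fun q => ip (V q) (W q)) p = ip (dirDeriv v V p) (W p) + ip (V p) (dirDeriv v W p) := by
  have hVi := differentiableAt_pi.1 hV
  have hWi := differentiableAt_pi.1 hW
  have hprod : ∀ i, DifferentiableAt ℝ (fun q => V q i * W q i) p := fun i => (hVi i).mul (hWi i)
  simp only [dd, ip, dirDeriv, pd_sum _ fun i _ => hprod i, pd_mul (hVi _) (hWi _)]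
  simp only [Fin.sum_univ_three]
  ring

theorem dirDeriv_eq_cross_curl_add (v : ℝ³) :
    dirDeriv v V p = cross (curl V p) v + fun k => ∑ j, v j * pd k (fun q => V q j) p := by
  ext i; fin_cases i <;> simp [dirDeriv, dd, cross, curl, Fin.sum_univ_three] <;> ring

theorem ip_curl_cross_eq_of_ip_eventually_eq_zero {c Z a : ℝ³ → ℝ³}
    (hc : DifferentiableAt ℝ c p) (hZ : DifferentiableAt ℝ Z p) (ha : DifferentiableAt ℝ a p)
    (hdiv : divg c p = 0) (hca : ∀ᶠ q in 𝓝 p, ip (c q) (a q) = 0) :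
    ip (curl (fun q => cross (c q) (Z q)) p) (a p)
      = -ip (c p) (dirDeriv (Z p) a p) - ip (dirDeriv (c p) Z p) (a p) := by
  have hdd : dd (Z p) (fun q => ip (c q) (a q)) p = 0 := by
    simp [dd, pd_eq_zero_of_eventuallyEq_zero hca]
  have hca_p : ip (c p) (a p) = 0 := hca.self_of_nhds
  rw [dd_ip hc ha] at hdd
  rw [curl_cross hc hZ, hdiv]
  simp only [ip, Pi.add_apply, Pi.sub_apply, Pi.smul_apply, smul_eq_mul, Fin.sum_univ_three]
    at hdd hca_p ⊢
  linear_combination divg Z p * hca_p + hdd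

end VectorCalculus

section ConstantMetric

variable {g : Matrix (Fin 3) (Fin 3) ℝ} {Z : ℝ³ → ℝ³} {p : ℝ³}

theorem ContDiffAt.mulVec {n : WithTop ℕ∞} (hZ : ContDiffAt ℝ n Z p) :
    ContDiffAt ℝ n (fun q => g *ᵥ Z q) p :=
  (LinearMap.toContinuousLinearMap (Matrix.mulVecLin g)).contDiff.contDiffAt.comp p hZ

theorem DifferentiableAt.mulVec (hZ : DifferentiableAt ℝ Z p) :
    DifferentiableAt ℝ (fun q => g *ᵥ Z q) p :=
  (LinearMap.toContinuousLinearMap (Matrix.mulVecLin g)).differentiableAt.comp p hZ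

theorem ip_mulVec_comm (hg : g.IsSymm) (v w : ℝ³) : ip (g *ᵥ v) w = ip v (g *ᵥ w) := by
  simp [ip, Matrix.mulVec, dotProduct, Fin.sum_univ_three, hg.apply]
  ring

theorem gB_eq_ip_mulVec (v w : ℝ³) : gB g v w = ip (g *ᵥ w) v := by
  simp [gB, ip, Matrix.mulVec, dotProduct, Fin.sum_univ_three]
  ring

theorem pd_mulVec (hZ : DifferentiableAt ℝ Z p) (i k : Fin 3) :
    pd i (fun q => (g *ᵥ Z q) k) p = (g *ᵥ fun l => pd i (fun q => Z q l) p) k := by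
  have hZl := differentiableAt_pi.1 hZ
  simp only [Matrix.mulVec, dotProduct]
  rw [pd_sum _ fun l _ => (hZl l).const_mul (g k l)]
  simp only [pd_const_mul]

theorem dirDeriv_mulVec (hZ : DifferentiableAt ℝ Z p) (v : ℝ³) :
    dirDeriv v (fun q => g *ᵥ Z q) p = g *ᵥ dirDeriv v Z p := by
  ext k
  simp only [dirDeriv, dd, pd_mulVec hZ]
  simp [dirDeriv, dd, Matrix.mulVec, dotProduct, Fin.sum_univ_three]
  ring

theorem dd_gB_self (hg : g.IsSymm) (hZ : DifferentiableAt ℝ Z p) (v : ℝ³) :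
    dd v (fun q => gB g (Z q) (Z q)) p = 2 * ip (dirDeriv v Z p) (g *ᵥ Z p) := by
  simp only [gB_eq_ip_mulVec]
  rw [dd_ip hZ.mulVec hZ, dirDeriv_mulVec hZ, ip_mulVec_comm hg]
  simp only [ip, Fin.sum_univ_three]
  ring

theorem dirDeriv_self_mulVec (hg : g.IsSymm) (hZ : DifferentiableAt ℝ Z p) :
    dirDeriv (Z p) (fun q => g *ᵥ Z q) p
      = cross (curl (fun q => g *ᵥ Z q) p) (Z p)
        + (2⁻¹ : ℝ) • grad (fun q => gB g (Z q) (Z q)) p := by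
  rw [dirDeriv_eq_cross_curl_add]
  congr 1
  ext k
  have hGk := dd_gB_self hg hZ (Pi.single k 1)
  rw [dd_single, dirDeriv_single] at hGk
  simp only [grad, Pi.smul_apply, hGk, pd_mulVec hZ, smul_eq_mul]
  simp [ip, Matrix.mulVec, dotProduct, Fin.sum_univ_three, hg.apply]
  ring

theorem ContDiffAt.gB_self {n : WithTop ℕ∞} (hZ : ContDiffAt ℝ n Z p) :
    ContDiffAt ℝ n (fun q => gB g (Z q) (Z q)) p := by
  have := contDiffAt_pi.1 hZ
  unfold gB
  fun_prop

theorem dirDeriv_self_mulVec_apply (hZ : DifferentiableAt ℝ Z p) (k : Fin 3) :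
    dirDeriv (Z p) (fun q => g *ᵥ Z q) p k
      = ∑ j, ∑ l, g k l * Z p j * pd j (fun q => Z q l) p := by
  rw [dirDeriv_mulVec hZ]
  simp [Matrix.mulVec, dotProduct, dirDeriv, dd, Fin.sum_univ_three]
  ring

theorem ip_curl_cross_curl_mulVec_eq (hg : g.IsSymm) (hZ : ContDiffAt ℝ 2 Z p)
    (hF : ∀ᶠ q in 𝓝 p, ip (curl (fun r => g *ᵥ Z r) q) (g *ᵥ Z q) = 0) :
    ip (curl (fun q => cross (curl (fun r => g *ᵥ Z r) q) (Z q)) p) (g *ᵥ Z p)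
      = -ip (curl (fun r => g *ᵥ Z r) p) (grad (fun q => gB g (Z q) (Z q)) p) := by
  have hZd : DifferentiableAt ℝ Z p := hZ.differentiableAt two_ne_zero
  have ha : ContDiffAt ℝ 2 (fun r => g *ᵥ Z r) p := hZ.mulVec
  have hDcZ := dd_gB_self hg hZd (curl (fun r => g *ᵥ Z r) p)
  rw [ip_curl_cross_eq_of_ip_eventually_eq_zero ha.differentiableAt_curl hZd
    (ha.differentiableAt two_ne_zero) (divg_curl ha) hF, dirDeriv_self_mulVec hg hZd]
  simp only [ip_eq_dotProduct, cross_eq_crossProduct, dotProduct_add, dotProduct_smul,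
    dot_self_cross, smul_eq_mul] at hDcZ ⊢
  rw [show dd _ _ p = _ ⬝ᵥ grad _ p from rfl] at hDcZ
  linarith

theorem ip_curl_two_div_smul_dirDeriv_eq_zero (hg : g.IsSymm) (hZ : ContDiffAt ℝ 2 Z p)
    (hG : gB g (Z p) (Z p) ≠ 0)
    (hF : ∀ᶠ q in 𝓝 p, ip (curl (fun r => g *ᵥ Z r) q) (g *ᵥ Z q) = 0) :
    ip (curl (fun q => (2 / gB g (Z q) (Z q)) • dirDeriv (Z q) (fun r => g *ᵥ Z r) q) p)
      (g *ᵥ Z p) = 0 := by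
  have hX := ip_curl_cross_curl_mulVec_eq hg hZ hF
  set a : ℝ³ → ℝ³ := fun r => g *ᵥ Z r
  set G : ℝ³ → ℝ := fun q => gB g (Z q) (Z q)
  set c := curl a
  have hG2 : ContDiffAt ℝ 2 G p := hZ.gB_self
  have hGd : DifferentiableAt ℝ G p := hG2.differentiableAt two_ne_zero
  have hcZ : DifferentiableAt ℝ (fun q => cross (c q) (Z q)) p :=
    differentiableAt_cross hZ.mulVec.differentiableAt_curl (hZ.differentiableAt two_ne_zero)
  have hgradG : DifferentiableAt ℝ (fun q => (2⁻¹ : ℝ) • grad G q) p :=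
    hG2.differentiableAt_grad.fun_const_smul _
  have hN : (fun q => dirDeriv (Z q) a q) =ᶠ[𝓝 p]
      fun q => cross (c q) (Z q) + (2⁻¹ : ℝ) • grad G q :=
    (hZ.eventually (by simp)).mono fun q hq =>
      dirDeriv_self_mulVec hg (hq.differentiableAt two_ne_zero)
  have hcurlN : curl (fun q => dirDeriv (Z q) a q) p = curl (fun q => cross (c q) (Z q)) p := by
    rw [curl_congr hN, curl_add hcZ hgradG, curl_const_smul, curl_grad hG2, smul_zero, add_zero]
  have hgradInv : grad (fun q => 2 / G q) p = -(2 / G p ^ 2) • grad G p := by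
    ext i
    simp [grad, pd_const_div 2 hGd hG]
    ring
  have hinv : DifferentiableAt ℝ (fun q => 2 / G q) p := by fun_prop (disch := exact hG)
  have hca : c p ⬝ᵥ a p = 0 := hF.self_of_nhds
  have hza : Z p ⬝ᵥ a p = G p := by rw [dotProduct_comm]; exact (gB_eq_ip_mulVec _ _).symm
  have hNp : dirDeriv (Z p) a p = cross (c p) (Z p) + (2⁻¹ : ℝ) • grad G p := hN.self_of_nhds
  rw [curl_smul hinv ((hcZ.add hgradG).congr_of_eventuallyEq hN), hcurlN, hgradInv, hNp]
  change ip _ (a p) = _ at hX ⊢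
  generalize curl (fun q => cross (c q) (Z q)) p = X at hX
  simp only [ip_eq_dotProduct, cross_eq_crossProduct] at hX ⊢
  simp [add_dotProduct, smul_dotProduct, map_add, map_smul, cross_cross_eq_smul_sub_smul',
    sub_dotProduct, hca, hza, hX]
  field_simp
  ring

end ConstantMetric

/-- if `⟨curl a, a⟩ ≡ 0` on `U` (integrability of the `g`-orthogonal
complement of `Z0`), then `⟨curl b, a⟩ ≡ 0` on `U`. -/
theorem lemma2_consequence
    (g : Matrix (Fin 3) (Fin 3) ℝ) (hsym : g.IsSymm)
    (U : Set (Fin 3 → ℝ)) (hU : IsOpen U)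
    (Z0 : (Fin 3 → ℝ) → (Fin 3 → ℝ)) (hZ0 : ContDiffOn ℝ (⊤ : ℕ∞) Z0 U)
    (G : (Fin 3 → ℝ) → ℝ) (hG : G = fun p => gB g (Z0 p) (Z0 p))
    (hGnz : ∀ p ∈ U, G p ≠ 0)
    (a : (Fin 3 → ℝ) → (Fin 3 → ℝ)) (ha : a = fun p => g.mulVec (Z0 p))
    (b : (Fin 3 → ℝ) → (Fin 3 → ℝ))
    (hb : b = fun p k => 2 / G p * ∑ j, ∑ l, g k l * Z0 p j * pd j (fun q => Z0 q l) p)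
    (hzero : ∀ p ∈ U, ip (curl a p) (a p) = 0) :
    ∀ p ∈ U, ip (curl b p) (a p) = 0 := by
  intro p hp
  have hZ : ∀ q ∈ U, ContDiffAt ℝ 2 Z0 q := fun q hq =>
    (hZ0.contDiffAt (hU.mem_nhds hq)).of_le (WithTop.coe_le_coe.2 le_top)
  have hb' : b =ᶠ[𝓝 p] fun q => (2 / G q) • dirDeriv (Z0 q) a q := by
    filter_upwards [hU.mem_nhds hp] with q hq
    ext k
    rw [hb, ha, Pi.smul_apply, smul_eq_mul,
      dirDeriv_self_mulVec_apply ((hZ q hq).differentiableAt two_ne_zero)]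
  subst hG ha
  rw [curl_congr hb']
  exact ip_curl_two_div_smul_dirDeriv_eq_zero hsym (hZ p hp) (hGnz p hp)
    (Filter.eventually_of_mem (hU.mem_nhds hp) hzero)
end
end

section
/- Let g be a constant real symmetric invertible 3×3 matrix and F : ℝ → ℝ smooth. On U := {(x,y,z) ∈ ℝ³ : z ≠ 0}, let φ := x/z and ψ := y/z. Then: (i) Z0 := ∇φ × ∇ψ satisfies Z0(p) = z⁻³·p for p = (x,y,z) ∈ U, and the vector field W(p) := p satisfies ∇_W W = W; (ii) the function V(p) := F(pᵀ g p) satisfies (g⁻¹∇φ)(V) = 0 and (g⁻¹∇ψ)(V) = 0 on U. -/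
/-!
`φ = x/z` and `ψ = y/z` are homogeneous of degree 0, so by Euler's identity `∇φ · p = ∇ψ · p = 0`.
For symmetric `g` the gradient of `V = F(pᵀgp)` is `2 F'(pᵀgp) g p`, hence
`(g⁻¹∇φ)(V) = 2 F'(pᵀgp) (∇φ · p) = 0`, and likewise for `ψ`.
-/

noncomputable section

open ContinuousLinearMap Matrix

lemma pd_eq_of_hasFDerivAt {f : (Fin 3 → ℝ) → ℝ} {L : (Fin 3 → ℝ) →L[ℝ] ℝ}
    {p : Fin 3 → ℝ} (h : HasFDerivAt f L p) (i : Fin 3) :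
    pd i f p = L (Pi.single i 1) := by
  rw [pd, h.fderiv]

lemma grad_eq_of_hasFDerivAt {f : (Fin 3 → ℝ) → ℝ} {L : (Fin 3 → ℝ) →L[ℝ] ℝ}
    {p w : Fin 3 → ℝ} (h : HasFDerivAt f L p) (hL : ∀ v, L v = w ⬝ᵥ v) :
    grad f p = w := by
  funext i
  rw [grad, pd_eq_of_hasFDerivAt h, hL, dotProduct_single, mul_one]

lemma dd_eq_dotProduct_grad (v : Fin 3 → ℝ) (f : (Fin 3 → ℝ) → ℝ) (p : Fin 3 → ℝ) :
    dd v f p = v ⬝ᵥ grad f p :=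
  rfl

lemma grad_comp {F : ℝ → ℝ} {f : (Fin 3 → ℝ) → ℝ} {p : Fin 3 → ℝ}
    (hF : DifferentiableAt ℝ F (f p)) (hf : DifferentiableAt ℝ f p) :
    grad (fun q => F (f q)) p = deriv F (f p) • grad f p := by
  funext i
  simp [grad, pd, fderiv_fun_comp p hF hf, mul_comm]

lemma grad_coord (i : Fin 3) (p : Fin 3 → ℝ) :
    grad (fun q => q i) p = Pi.single i 1 :=
  grad_eq_of_hasFDerivAt (proj i : (Fin 3 → ℝ) →L[ℝ] ℝ).hasFDerivAt fun v => by
    simp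

lemma grad_coord_div_coord (k j : Fin 3) {p : Fin 3 → ℝ} (hp : p j ≠ 0) :
    grad (fun q => q k / q j) p
      = (p j)⁻¹ • Pi.single k 1 - (p k / p j ^ 2) • Pi.single j 1 := by
  have hinv : HasFDerivAt (fun q : Fin 3 → ℝ => (q j)⁻¹)
      ((-(p j ^ 2)⁻¹) • (proj j : (Fin 3 → ℝ) →L[ℝ] ℝ)) p :=
    (hasDerivAt_inv hp).comp_hasFDerivAt p (proj j : (Fin 3 → ℝ) →L[ℝ] ℝ).hasFDerivAt
  have h := (proj k : (Fin 3 → ℝ) →L[ℝ] ℝ).hasFDerivAt.fun_mul hinv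
  simp only [← div_eq_mul_inv] at h
  refine grad_eq_of_hasFDerivAt h fun v => ?_
  simp only [_root_.add_apply, _root_.smul_apply, proj_apply, smul_eq_mul, sub_dotProduct,
    smul_dotProduct, single_dotProduct, one_mul]
  field_simp
  ring

lemma grad_coord_div_coord_dotProduct_self (k j : Fin 3) {p : Fin 3 → ℝ} (hp : p j ≠ 0) :
    grad (fun q => q k / q j) p ⬝ᵥ p = 0 := by
  rw [grad_coord_div_coord k j hp, sub_dotProduct, smul_dotProduct, smul_dotProduct,
    single_dotProduct, single_dotProduct, smul_eq_mul, smul_eq_mul, one_mul, one_mul]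
  field_simp
  ring

lemma grad_gB_self (g : Matrix (Fin 3) (Fin 3) ℝ) (p : Fin 3 → ℝ) :
    grad (fun q => gB g q q) p = (g + gᵀ) *ᵥ p := by
  have h : HasFDerivAt (fun q => gB g q q)
      (∑ i, ∑ j, ((g i j * p i) • (proj j : (Fin 3 → ℝ) →L[ℝ] ℝ)
        + p j • g i j • (proj i : (Fin 3 → ℝ) →L[ℝ] ℝ))) p :=
    HasFDerivAt.fun_sum fun i _ => HasFDerivAt.fun_sum fun j _ =>
      ((proj i : (Fin 3 → ℝ) →L[ℝ] ℝ).hasFDerivAt.const_mul (g i j)).fun_mul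
        (proj j : (Fin 3 → ℝ) →L[ℝ] ℝ).hasFDerivAt
  refine grad_eq_of_hasFDerivAt h fun v => ?_
  simp only [Fin.sum_univ_three, dotProduct, mulVec, _root_.add_apply, _root_.smul_apply,
    proj_apply, smul_eq_mul, Matrix.add_apply, transpose_apply]
  ring

lemma inv_mulVec_dotProduct_mulVec {n : Type*} [Fintype n] [DecidableEq n]
    {g : Matrix n n ℝ} (hsym : g.IsSymm) (hinv : IsUnit g.det) (u v : n → ℝ) :
    (g⁻¹ *ᵥ u) ⬝ᵥ (g *ᵥ v) = u ⬝ᵥ v := by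
  rw [dotProduct_mulVec, ← vecMul_transpose, transpose_nonsing_inv, hsym.eq, vecMul_vecMul,
    nonsing_inv_mul g hinv, vecMul_one]

lemma cross_grad_coord_div_coord_two {p : Fin 3 → ℝ} (hp : p 2 ≠ 0) :
    cross (grad (fun q => q 0 / q 2) p) (grad (fun q => q 1 / q 2) p) = (p 2)⁻¹ ^ 3 • p := by
  rw [grad_coord_div_coord 0 2 hp, grad_coord_div_coord 1 2 hp]
  funext i
  fin_cases i <;>
    simp only [cross, Fin.reduceFinMk, cons_val, Pi.sub_apply, Pi.smul_apply, Pi.single_apply,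
      smul_eq_mul, Fin.reduceEq, ↓reduceIte] <;>
    field_simp <;> ring

lemma nab_id (p : Fin 3 → ℝ) : nab (fun q => q) p = p := by
  funext i
  change p ⬝ᵥ grad (fun q => q i) p = p i
  rw [grad_coord, dotProduct_single, mul_one]

lemma dd_inv_mulVec_comp_gB_self {g : Matrix (Fin 3) (Fin 3) ℝ} (hsym : g.IsSymm)
    (hinv : IsUnit g.det) {F : ℝ → ℝ} {p : Fin 3 → ℝ} (hF : DifferentiableAt ℝ F (gB g p p))
    (u : Fin 3 → ℝ) :
    dd (g⁻¹ *ᵥ u) (fun q => F (gB g q q)) p = 2 * deriv F (gB g p p) * (u ⬝ᵥ p) := by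
  have hQ : DifferentiableAt ℝ (fun q => gB g q q) p := by
    unfold gB
    fun_prop
  rw [dd_eq_dotProduct_grad, grad_comp (f := fun q => gB g q q) hF hQ, grad_gB_self, hsym.eq,
    add_mulVec, dotProduct_smul, dotProduct_add, inv_mulVec_dotProduct_mulVec hsym hinv,
    smul_eq_mul]
  ring

/-- Example 1: for `φ = x/z`, `ψ = y/z` on `z ≠ 0`:
(i) `Z0 = ∇φ × ∇ψ = z⁻³·(x,y,z)` and the field `W(p) = p` satisfies `∇_W W = W`;
(ii) for any constant symmetric invertible `g` and smooth `F`, the potential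
`V(p) = F(pᵀgp)` satisfies `Z1(V) = Z2(V) = 0`. -/
theorem example1_lines_through_origin
    (g : Matrix (Fin 3) (Fin 3) ℝ) (hsym : g.IsSymm) (hinv : IsUnit g.det)
    (F : ℝ → ℝ) (hF : ContDiff ℝ (⊤ : ℕ∞) F)
    (U : Set (Fin 3 → ℝ)) (hU : U = {p | p 2 ≠ 0})
    (φ ψ : (Fin 3 → ℝ) → ℝ)
    (hφ : φ = fun p => p 0 / p 2) (hψ : ψ = fun p => p 1 / p 2)
    (V : (Fin 3 → ℝ) → ℝ) (hV : V = fun p => F (gB g p p)) :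
    (∀ p ∈ U, cross (grad φ p) (grad ψ p) = (p 2)⁻¹ ^ 3 • p) ∧
    (∀ p : Fin 3 → ℝ, nab (fun q => q) p = p) ∧
    (∀ p ∈ U, dd (g⁻¹.mulVec (grad φ p)) V p = 0 ∧
              dd (g⁻¹.mulVec (grad ψ p)) V p = 0) := by
  subst hU hφ hψ hV
  refine ⟨fun p hp => cross_grad_coord_div_coord_two hp, nab_id, fun p hp => ?_⟩
  have hFp : DifferentiableAt ℝ F (gB g p p) := hF.differentiable (by simp) _
  simp only [dd_inv_mulVec_comp_gB_self hsym hinv hFp,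
    grad_coord_div_coord_dotProduct_self _ 2 hp, mul_zero, and_self]
end
end
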